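/- Let w be a weight on ℝⁿ and suppose there exist constants B, β ≥ 1 and γ > 0 such that the weighted sharp Tauberian constant of the strong maximal operator satisfies C_S^w(α) - 1 ≤ B (1-α)^{1/β} for all α with 1 - e^{-γ} < α < 1. Then for every axis-parallel rectangular parallelepiped R ⊆ ℝⁿ and every measurable E ⊆ R, w(E)/w(R) ≤ max(B, e^{γ/β}) · (|E|/|R|)^{1/β}. -/

import Mathlib

open MeasureTheory Set
open scoped ENNReal NNReal

/-- The open axis-parallel rectangle (rectangular parallelepiped) determined by `a` and `b`. -/
def rect {n : ℕ} (a b : Fin n → ℝ) : Set (Fin n → ℝ) :=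
  Set.univ.pi fun i => Set.Ioo (a i) (b i)

/-- The strong maximal operator on `ℝⁿ` over axis-parallel rectangles. -/
noncomputable def MS {n : ℕ} (f : (Fin n → ℝ) → ℝ) (x : Fin n → ℝ) : ℝ :=
  sSup {r : ℝ | ∃ a b : Fin n → ℝ, (∀ i, x i ∈ Set.Ioo (a i) (b i)) ∧
    r = (volume (rect a b)).toReal⁻¹ * ∫ y in rect a b, |f y|}

/-- The `w`-measure of a set: `w(S) = ∫_S w`. -/
noncomputable def wInt {n : ℕ} (w : (Fin n → ℝ) → ℝ) (S : Set (Fin n → ℝ)) : ℝ≥0∞ :=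
  ∫⁻ x in S, ENNReal.ofReal (w x)

/-- The weighted sharp Tauberian constant of the strong maximal operator. -/
noncomputable def CSw {n : ℕ} (w : (Fin n → ℝ) → ℝ) (α : ℝ) : ℝ≥0∞ :=
  ⨆ (E : Set (Fin n → ℝ)) (_ : MeasurableSet E) (_ : 0 < wInt w E) (_ : wInt w E < ⊤),
    wInt w {x | α < MS (E.indicator 1) x} / wInt w E

/-!
Let `t = |E| / |R|`. Every point of `R` sees `R \ E` with density `1 - t`, so
`R ⊆ {M_S 1_{R \ E} > α}` whenever `α < 1 - t`, and the definition of `C_S^w(α)` gives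
`w(R) ≤ C_S^w(α) w(R \ E)`, i.e. `w(E) ≤ (C_S^w(α) - 1) w(R) ≤ B (1 - α)^{1/β} w(R)`.
Letting `α ↑ 1 - t` proves the claim for `t < e^{-γ}`; for `t ≥ e^{-γ}` the constant is at
least `1`. If `w(R \ E) = 0`, test `C_S^w(α)` on `(R \ E) ∪ A` instead, with `A ⊆ E` of
arbitrarily small positive weight (they exist since `w dx` has no atoms): then `w(E) = 0`.
-/

open Filter Metric
open scoped Topology

theorem exists_measurableSet_measure_pos_lt {X : Type*} [MetricSpace X]
    [SecondCountableTopology X] [MeasurableSpace X] [OpensMeasurableSpace X]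
    (μ : Measure X) [IsFiniteMeasure μ] [NullSingletonClass μ] (hμ : μ ≠ 0)
    {ε : ℝ≥0∞} (hε : 0 < ε) : ∃ t, MeasurableSet t ∧ 0 < μ t ∧ μ t < ε := by
  by_contra! h
  refine hμ (Measure.measure_univ_eq_zero.1 (measure_null_of_locally_null univ fun x _ => ?_))
  have hball : Tendsto (fun r => μ (ball x r)) (𝓝[>] 0) (𝓝 0) := by
    simpa [thickening_singleton] using
      tendsto_measure_thickening (μ := μ) (s := {x}) ⟨1, one_pos, measure_ne_top _ _⟩
  obtain ⟨r, hμr, hr⟩ := ((hball.eventually (gt_mem_nhds hε)).and self_mem_nhdsWithin).exists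
  refine ⟨ball x r, mem_nhdsWithin_of_mem_nhds (ball_mem_nhds x hr), ?_⟩
  by_contra hne
  exact (h _ measurableSet_ball (pos_iff_ne_zero.2 hne)).not_gt hμr

theorem measurableSet_rect {n : ℕ} (a b : Fin n → ℝ) : MeasurableSet (rect a b) :=
  MeasurableSet.univ_pi fun _ => measurableSet_Ioo

theorem rect_subset_Icc {n : ℕ} (a b : Fin n → ℝ) : rect a b ⊆ Icc a b := by
  rw [← pi_univ_Icc]
  exact pi_mono fun _ _ => Ioo_subset_Icc_self

theorem volume_rect_lt_top {n : ℕ} (a b : Fin n → ℝ) : volume (rect a b) < ∞ :=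
  (measure_mono (rect_subset_Icc a b)).trans_lt isCompact_Icc.measure_lt_top

theorem volume_rect_pos {n : ℕ} {a b : Fin n → ℝ} (hab : ∀ i, a i < b i) :
    0 < volume (rect a b) := by
  rw [rect, volume_pi_pi]
  simpa [Real.volume_Ioo, pos_iff_ne_zero, Finset.prod_ne_zero_iff] using hab

theorem neZero_of_measure_lt {n : ℕ} {μ : Measure (Fin n → ℝ)} {E S : Set (Fin n → ℝ)}
    (hE : E.Nonempty) (h : μ E < μ S) : NeZero n := by
  cases n with
  | zero => exact absurd (measure_mono (subset_univ S)) (hE.eq_univ ▸ h).not_ge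
  | succ n => infer_instance

theorem setIntegral_abs_indicator_one {X : Type*} [MeasurableSpace X] (μ : Measure X)
    {G : Set X} (hG : MeasurableSet G) (S : Set X) :
    ∫ y in S, |G.indicator 1 y| ∂μ = (μ (S ∩ G)).toReal := by
  have habs : (fun y => |G.indicator (1 : X → ℝ) y|) = G.indicator 1 :=
    funext fun y => abs_of_nonneg (indicator_nonneg (fun _ _ => zero_le_one) y)
  rw [habs, setIntegral_indicator hG]
  simp [Measure.real]

theorem toReal_div_le_MS_indicator {n : ℕ} {G : Set (Fin n → ℝ)} (hG : MeasurableSet G)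
    {a b x : Fin n → ℝ} (hx : x ∈ rect a b) :
    (volume (rect a b ∩ G)).toReal / (volume (rect a b)).toReal ≤ MS (G.indicator 1) x := by
  refine le_csSup ⟨1, ?_⟩ ⟨a, b, fun i => hx i (mem_univ i), ?_⟩
  · rintro r ⟨a', b', -, rfl⟩
    rw [setIntegral_abs_indicator_one volume hG, ← div_eq_inv_mul]
    exact div_le_one_of_le₀ (ENNReal.toReal_mono (volume_rect_lt_top a' b').ne
      (measure_mono inter_subset_left)) ENNReal.toReal_nonneg
  · rw [setIntegral_abs_indicator_one volume hG, div_eq_inv_mul]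

noncomputable def weightedVolume {n : ℕ} (w : (Fin n → ℝ) → ℝ) : Measure (Fin n → ℝ) :=
  volume.withDensity fun x => ENNReal.ofReal (w x)

theorem wInt_eq_weightedVolume {n : ℕ} (w : (Fin n → ℝ) → ℝ) (S : Set (Fin n → ℝ)) :
    wInt w S = weightedVolume w S :=
  (withDensity_apply' _ S).symm

instance {n : ℕ} [NeZero n] (w : (Fin n → ℝ) → ℝ) : NullSingletonClass (weightedVolume w) :=
  nullSingletonClass_withDensity _

theorem wInt_rect_lt_top {n : ℕ} {w : (Fin n → ℝ) → ℝ} (hloc : LocallyIntegrable w volume)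
    (a b : Fin n → ℝ) : wInt w (rect a b) < ∞ :=
  (lintegral_mono_set (rect_subset_Icc a b)).trans_lt
    (hloc.integrableOn_isCompact isCompact_Icc).setLIntegral_lt_top

theorem wInt_le_CSw_mul {n : ℕ} {w : (Fin n → ℝ) → ℝ} {α : ℝ} {G S : Set (Fin n → ℝ)}
    (hG : MeasurableSet G) (h0 : 0 < wInt w G) (htop : wInt w G < ∞)
    (hS : S ⊆ {x | α < MS (G.indicator 1) x}) : wInt w S ≤ CSw w α * wInt w G := by
  have hratio : wInt w {x | α < MS (G.indicator 1) x} / wInt w G ≤ CSw w α :=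
    le_iSup_of_le G <| le_iSup_of_le hG <| le_iSup_of_le h0 <| le_iSup_of_le htop le_rfl
  calc wInt w S ≤ wInt w {x | α < MS (G.indicator 1) x} := lintegral_mono_set hS
    _ ≤ CSw w α * wInt w G := (ENNReal.div_le_iff h0.ne' htop.ne).1 hratio

theorem rect_subset_setOf_lt_MS_indicator {n : ℕ} {a b : Fin n → ℝ} (hab : ∀ i, a i < b i)
    {E G : Set (Fin n → ℝ)} (hEsub : E ⊆ rect a b) (hE : MeasurableSet E)
    (hG : MeasurableSet G) (hEG : rect a b \ E ⊆ G) {α : ℝ}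
    (hα : α < 1 - (volume E).toReal / (volume (rect a b)).toReal) :
    rect a b ⊆ {x | α < MS (G.indicator 1) x} := by
  intro x hx
  have hR : volume (rect a b) ≠ ∞ := (volume_rect_lt_top a b).ne
  have hRpos : 0 < (volume (rect a b)).toReal :=
    ENNReal.toReal_pos (volume_rect_pos hab).ne' hR
  have hcompl : 1 - (volume E).toReal / (volume (rect a b)).toReal
      = (volume (rect a b \ E)).toReal / (volume (rect a b)).toReal := by
    rw [measure_sdiff hEsub hE.nullMeasurableSet (ne_top_of_le_ne_top hR (measure_mono hEsub)),
      ENNReal.toReal_sub_of_le (measure_mono hEsub) hR]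
    field_simp
  calc α < (volume (rect a b \ E)).toReal / (volume (rect a b)).toReal := hcompl ▸ hα
    _ ≤ (volume (rect a b ∩ G)).toReal / (volume (rect a b)).toReal :=
      div_le_div_of_nonneg_right (ENNReal.toReal_mono
        (ne_top_of_le_ne_top hR (measure_mono inter_subset_left))
        (measure_mono (subset_inter sdiff_subset hEG))) hRpos.le
    _ ≤ MS (G.indicator 1) x := toReal_div_le_MS_indicator hG hx

theorem wInt_eq_zero_of_wInt_diff_eq_zero {n : ℕ} {w : (Fin n → ℝ) → ℝ}
    (hloc : LocallyIntegrable w volume) {a b : Fin n → ℝ} (hab : ∀ i, a i < b i)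
    {E : Set (Fin n → ℝ)} (hEsub : E ⊆ rect a b) (hE : MeasurableSet E) {α : ℝ} (hα0 : 0 ≤ α)
    (hα : α < 1 - (volume E).toReal / (volume (rect a b)).toReal) (hC : CSw w α ≠ ∞)
    (hF : wInt w (rect a b \ E) = 0) : wInt w E = 0 := by
  by_contra hE0
  have hRtop := wInt_rect_lt_top hloc a b
  simp only [wInt_eq_weightedVolume] at hE0 hF hRtop ⊢
  set μ := weightedVolume w
  have hvR : volume (rect a b) ≠ ∞ := (volume_rect_lt_top a b).ne
  have hvE : volume E ≠ ∞ := ne_top_of_le_ne_top hvR (measure_mono hEsub)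
  have hvEvR : volume E < volume (rect a b) := by
    have hRpos := ENNReal.toReal_pos (volume_rect_pos hab).ne' hvR
    refine (ENNReal.toReal_lt_toReal hvE hvR).1 ?_
    rw [← div_lt_one hRpos]
    linarith
  have : NeZero n := neZero_of_measure_lt (nonempty_of_measure_ne_zero hE0) hvEvR
  have : IsFiniteMeasure (μ.restrict E) :=
    isFiniteMeasure_restrict.2 (ne_top_of_le_ne_top hRtop.ne (measure_mono hEsub))
  obtain ⟨c, hc, hcC⟩ := ENNReal.exists_pos_mul_lt hC hE0
  obtain ⟨A, hA, hA0, hAc⟩ := exists_measurableSet_measure_pos_lt (μ.restrict E)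
    (by rwa [Ne, Measure.restrict_eq_zero]) hc
  rw [Measure.restrict_apply hA] at hA0 hAc
  set G := (rect a b \ E) ∪ (A ∩ E)
  have hGmeas : MeasurableSet G := ((measurableSet_rect a b).diff hE).union (hA.inter hE)
  have hGA : μ G ≤ μ (A ∩ E) := (measure_union_le _ _).trans (by rw [hF, zero_add])
  have hRG := wInt_le_CSw_mul hGmeas
    (by rw [wInt_eq_weightedVolume]; exact hA0.trans_le (measure_mono subset_union_right))
    (by rw [wInt_eq_weightedVolume]; exact hGA.trans_lt (hAc.trans_le le_top))
    (rect_subset_setOf_lt_MS_indicator hab hEsub hE hGmeas subset_union_left hα)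
  simp only [wInt_eq_weightedVolume] at hRG
  refine (lt_irrefl (μ E)) ?_
  calc μ E ≤ μ (rect a b) := measure_mono hEsub
    _ ≤ CSw w α * μ G := hRG
    _ ≤ CSw w α * c := by gcongr; exact hGA.trans hAc.le
    _ < μ E := by rwa [mul_comm]

theorem wInt_le_CSw_sub_one_mul {n : ℕ} {w : (Fin n → ℝ) → ℝ}
    (hloc : LocallyIntegrable w volume) {a b : Fin n → ℝ} (hab : ∀ i, a i < b i)
    {E : Set (Fin n → ℝ)} (hEsub : E ⊆ rect a b) (hE : MeasurableSet E) {α : ℝ} (hα0 : 0 ≤ α)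
    (hα : α < 1 - (volume E).toReal / (volume (rect a b)).toReal) (hC : CSw w α ≠ ∞) :
    wInt w E ≤ (CSw w α - 1) * wInt w (rect a b) := by
  obtain hF | hF := eq_or_ne (wInt w (rect a b \ E)) 0
  · simp [wInt_eq_zero_of_wInt_diff_eq_zero hloc hab hEsub hE hα0 hα hC hF]
  have hFR : wInt w (rect a b \ E) ≤ wInt w (rect a b) := lintegral_mono_set sdiff_subset
  have hFtop : wInt w (rect a b \ E) ≠ ∞ := ne_top_of_le_ne_top (wInt_rect_lt_top hloc a b).ne hFR
  have hRF : wInt w (rect a b) ≤ CSw w α * wInt w (rect a b \ E) :=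
    wInt_le_CSw_mul ((measurableSet_rect a b).diff hE) (pos_iff_ne_zero.2 hF) hFtop.lt_top
      (rect_subset_setOf_lt_MS_indicator hab hEsub hE ((measurableSet_rect a b).diff hE)
        subset_rfl hα)
  have hsplit : wInt w E + wInt w (rect a b \ E) = wInt w (rect a b) := by
    simp only [wInt_eq_weightedVolume]
    rw [measure_add_sdiff hE.nullMeasurableSet, union_eq_right.2 hEsub]
  calc wInt w E = wInt w (rect a b) - wInt w (rect a b \ E) :=
        ENNReal.eq_sub_of_add_eq hFtop hsplit
    _ ≤ CSw w α * wInt w (rect a b \ E) - wInt w (rect a b \ E) := tsub_le_tsub_right hRF _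
    _ = (CSw w α - 1) * wInt w (rect a b \ E) := by
        rw [ENNReal.sub_mul fun _ _ => hFtop, one_mul]
    _ ≤ (CSw w α - 1) * wInt w (rect a b) := by gcongr

theorem one_le_max_mul_rpow {B β γ t : ℝ} (hβ : 0 < β) (ht : Real.exp (-γ) ≤ t) :
    1 ≤ max B (Real.exp (γ / β)) * t ^ (1 / β) := by
  have hexp : Real.exp (γ / β) * Real.exp (-γ) ^ (1 / β) = 1 := by
    rw [← Real.exp_mul, ← Real.exp_add, show γ / β + -γ * (1 / β) = 0 by ring, Real.exp_zero]
  calc 1 = Real.exp (γ / β) * Real.exp (-γ) ^ (1 / β) := hexp.symm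
    _ ≤ max B (Real.exp (γ / β)) * t ^ (1 / β) := by gcongr; exact le_max_right _ _

theorem stmt7_general {n : ℕ} (w : (Fin n → ℝ) → ℝ)
    (hloc : LocallyIntegrable w volume)
    (B β γ : ℝ) (hβ : 1 ≤ β) (hγ : 0 < γ)
    (htaub : ∀ α : ℝ, 1 - Real.exp (-γ) < α → α < 1 →
      CSw w α - 1 ≤ ENNReal.ofReal (B * (1 - α) ^ (1 / β))) :
    ∀ a b : Fin n → ℝ, (∀ i, a i < b i) → ∀ E ⊆ rect a b, MeasurableSet E →
      wInt w E ≤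
        ENNReal.ofReal (max B (Real.exp (γ / β)) *
          ((volume E).toReal / (volume (rect a b)).toReal) ^ (1 / β)) *
        wInt w (rect a b) := by
  intro a b hab E hEsub hE
  set t := (volume E).toReal / (volume (rect a b)).toReal
  have ht0 : 0 ≤ t := div_nonneg ENNReal.toReal_nonneg ENNReal.toReal_nonneg
  have hβ0 : 0 < β := one_pos.trans_le hβ
  obtain hbig | hsmall := le_or_gt (Real.exp (-γ)) t
  · calc wInt w E ≤ 1 * wInt w (rect a b) := by rw [one_mul]; exact lintegral_mono_set hEsub
      _ ≤ _ := by gcongr; exact ENNReal.one_le_ofReal.2 (one_le_max_mul_rpow hβ0 hbig)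
  have hkey : ∀ s ∈ Ioo t (Real.exp (-γ)),
      wInt w E ≤ ENNReal.ofReal (B * s ^ (1 / β)) * wInt w (rect a b) := by
    rintro s ⟨hts, hsγ⟩
    have hexp : Real.exp (-γ) < 1 := Real.exp_lt_one_iff.2 (neg_neg_of_pos hγ)
    have hCs := htaub (1 - s) (by linarith) (by linarith)
    rw [sub_sub_cancel] at hCs
    have hC : CSw w (1 - s) ≠ ∞ := fun h => by simp [h] at hCs
    calc wInt w E ≤ (CSw w (1 - s) - 1) * wInt w (rect a b) :=
          wInt_le_CSw_sub_one_mul hloc hab hEsub hE (by linarith) (by linarith) hC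
      _ ≤ _ := by gcongr
  have hcont : ContinuousAt (fun s => ENNReal.ofReal (B * s ^ (1 / β)) * wInt w (rect a b)) t :=
    (ENNReal.continuous_mul_const (wInt_rect_lt_top hloc a b).ne).continuousAt.comp <|
      ENNReal.continuous_ofReal.continuousAt.comp <|
        continuousAt_const.mul (Real.continuousAt_rpow_const t _ (Or.inr (by positivity)))
  calc wInt w E ≤ ENNReal.ofReal (B * t ^ (1 / β)) * wInt w (rect a b) :=
        ge_of_tendsto (hcont.tendsto.mono_left nhdsWithin_le_nhds)
          (eventually_of_mem (Ioo_mem_nhdsGT hsmall) hkey)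
    _ ≤ _ := by gcongr; exact le_max_left _ _

/-- a weighted Solyanik estimate for the strong maximal operator implies
the absorption property on rectangles. -/
theorem stmt7 {n : ℕ} (w : (Fin n → ℝ) → ℝ) (hw : ∀ x, 0 ≤ w x) (hmeas : Measurable w)
    (hloc : LocallyIntegrable w volume)
    (B β γ : ℝ) (hB : 1 ≤ B) (hβ : 1 ≤ β) (hγ : 0 < γ)
    (htaub : ∀ α : ℝ, 1 - Real.exp (-γ) < α → α < 1 →
      CSw w α - 1 ≤ ENNReal.ofReal (B * (1 - α) ^ (1 / β))) :
    ∀ a b : Fin n → ℝ, (∀ i, a i < b i) → ∀ E ⊆ rect a b, MeasurableSet E →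
      wInt w E ≤
        ENNReal.ofReal (max B (Real.exp (γ / β)) *
          ((volume E).toReal / (volume (rect a b)).toReal) ^ (1 / β)) *
        wInt w (rect a b) :=
  stmt7_general w hloc B β γ hβ hγ htaub
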